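/- arXiv:0904.3493 — 3 statements merged into one kernel-verified Lean document; each statement's English description precedes it below -/
import Mathlib

section
/- Let h : ℝ → ℝ be positive, C², and 2π-periodic with h + h'' > 0, and suppose h satisfies (h²)''' + 4(h²)' = 0. Then the curve γ(θ) = (h(θ) + i h'(θ)) e^{iθ} traces an origin-centered ellipse: there is a symmetric positive-definite 2×2 matrix A with h(θ) = ‖A e^{iθ}‖ for all θ. -/
open Filter Set Metric Matrix


lemma hasDerivAt_of_punctured {v φ : ℝ → ℝ} {θ : ℝ}
    (hv : Continuous v) (hφ : Continuous φ)
    (hd : ∀ᶠ x in nhdsWithin θ {θ}ᶜ, HasDerivAt v (φ x) x) :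
    HasDerivAt v (φ θ) θ := by
  rw [hasDerivAt_iff_tendsto_slope]
  rw [Metric.tendsto_nhdsWithin_nhds]
  intro ε hε
  obtain ⟨δ1, hδ1, hball'⟩ := Metric.mem_nhdsWithin_iff.mp hd
  have hball : ∀ y : ℝ, |y - θ| < δ1 → y ≠ θ → HasDerivAt v (φ y) y := by
    intro y h1 h2
    exact hball' ⟨Metric.mem_ball.mpr (by rwa [Real.dist_eq]), h2⟩
  obtain ⟨δ2, hδ2, hcont⟩ := Metric.tendsto_nhds_nhds.mp (hφ.tendsto θ) (ε/2) (half_pos hε)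
  refine ⟨min δ1 δ2, lt_min hδ1 hδ2, ?_⟩
  intro x hx hdist
  have hxθ : x ≠ θ := hx
  rw [Real.dist_eq] at hdist
  have hd1 := abs_sub_lt_iff.mp hdist
  have key : ∃ c : ℝ, |c - θ| < min δ1 δ2 ∧ c ≠ θ ∧ φ c = slope v θ x := by
    rcases lt_or_gt_of_ne hxθ with hlt | hgt
    · obtain ⟨c, hc, hceq⟩ := exists_hasDerivAt_eq_slope v φ hlt
        hv.continuousOn
        (fun y hy => hball y (by rw [abs_sub_lt_iff]; constructor <;> nlinarith [hy.1, hy.2, le_min_iff.mp (le_of_lt (lt_min hδ1 hδ2)), min_le_left δ1 δ2, min_le_right δ1 δ2]) (ne_of_lt hy.2))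
      exact ⟨c, by rw [abs_sub_lt_iff]; constructor <;> nlinarith [hc.1, hc.2, min_le_left δ1 δ2, min_le_right δ1 δ2],
        ne_of_lt hc.2, by rw [hceq, slope_def_field, ← neg_sub (v x), ← neg_sub x, neg_div_neg_eq]⟩
    · obtain ⟨c, hc, hceq⟩ := exists_hasDerivAt_eq_slope v φ hgt
        hv.continuousOn
        (fun y hy => hball y (by rw [abs_sub_lt_iff]; constructor <;> nlinarith [hy.1, hy.2, min_le_left δ1 δ2, min_le_right δ1 δ2]) (ne_of_gt hy.1))
      exact ⟨c, by rw [abs_sub_lt_iff]; constructor <;> nlinarith [hc.1, hc.2, min_le_left δ1 δ2, min_le_right δ1 δ2],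
        ne_of_gt hc.1, by rw [hceq, slope_def_field]⟩
  obtain ⟨c, hcd, hcne, hceq⟩ := key
  rw [← hceq]
  have := hcont (show dist c θ < δ2 by rw [Real.dist_eq]; exact hcd.trans_le (min_le_right _ _))
  calc dist (φ c) (φ θ) < ε/2 := this
    _ < ε := by linarith

lemma main_ode (f : ℝ → ℝ) (hf : ContDiff ℝ 2 f)
    (hode : ∀ θ, deriv (deriv (deriv f)) θ = -(4 * deriv f θ)) :
    ∃ a b c : ℝ, ∀ θ, f θ = c + a * Real.cos (2*θ) + b * Real.sin (2*θ) := by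
  set g := deriv f with hg_def
  set v := deriv g with hv_def
  have hf2 : ContDiff ℝ ((1:ℕ)+1) f := by exact_mod_cast hf
  have hg1 : ContDiff ℝ 1 g := (contDiff_succ_iff_deriv.mp hf2).2.2
  have hgcont : Continuous g := hg1.continuous
  have hvcont : Continuous v := (contDiff_one_iff_deriv.mp hg1).2
  have hgd : ∀ θ, HasDerivAt g (v θ) θ :=
    fun θ => ((hg1.differentiable one_ne_zero) θ).hasDerivAt
  have hfd : ∀ θ, HasDerivAt f (g θ) θ :=
    fun θ => ((hf.differentiable two_ne_zero) θ).hasDerivAt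
  have hode' : ∀ θ, deriv v θ = -(4 * g θ) := hode
  -- step 1
  have step1 : ∀ θ, g θ ≠ 0 → HasDerivAt v (-(4 * g θ)) θ := by
    intro θ hθ
    by_cases hdiff : DifferentiableAt ℝ v θ
    · have := hdiff.hasDerivAt
      rwa [hode' θ] at this
    · exfalso
      have h0 : deriv v θ = 0 := deriv_zero_of_not_differentiableAt hdiff
      rw [hode' θ] at h0
      apply hθ; linarith
  -- step 2
  have step2 : ∀ θ, g θ = 0 → v θ ≠ 0 → HasDerivAt v (-(4 * g θ)) θ := by
    intro θ hgθ hvθ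
    have hφ : Continuous (fun x => -(4 * g x)) := (continuous_const.mul hgcont).neg
    exact hasDerivAt_of_punctured hvcont hφ (by
      have hslope : Tendsto (slope g θ) (nhdsWithin θ {θ}ᶜ) (nhds (v θ)) :=
        hasDerivAt_iff_tendsto_slope.mp (hgd θ)
      have hne : ∀ᶠ x in nhdsWithin θ {θ}ᶜ, slope g θ x ≠ 0 :=
        hslope.eventually_ne hvθ
      filter_upwards [hne, self_mem_nhdsWithin] with x hx hx'
      apply step1
      intro hgx
      apply hx
      rw [slope_def_field, hgx, hgθ]
      simp)
  have stepB : ∀ θ, ¬(g θ = 0 ∧ v θ = 0) → HasDerivAt v (-(4 * g θ)) θ := by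
    intro θ hθ
    by_cases hgθ : g θ = 0
    · exact step2 θ hgθ (fun hv0 => hθ ⟨hgθ, hv0⟩)
    · exact step1 θ hgθ
  -- derivative helpers for trig
  have hc2 : ∀ x : ℝ, HasDerivAt (fun y => Real.cos (2*y)) (-Real.sin (2*x) * 2) x := by
    intro x
    have h2 : HasDerivAt (fun y : ℝ => 2*y) 2 x := by
      simpa using (hasDerivAt_id x).const_mul (2:ℝ)
    exact (Real.hasDerivAt_cos (2*x)).comp x h2
  have hs2 : ∀ x : ℝ, HasDerivAt (fun y => Real.sin (2*y)) (Real.cos (2*x) * 2) x := by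
    intro x
    have h2 : HasDerivAt (fun y : ℝ => 2*y) 2 x := by
      simpa using (hasDerivAt_id x).const_mul (2:ℝ)
    exact (Real.hasDerivAt_sin (2*x)).comp x h2
  -- main claim : g = w
  have hgw : ∀ θ, g θ = g 0 * Real.cos (2*θ) + v 0 / 2 * Real.sin (2*θ) := by
    by_cases hB : ∃ b, g b = 0 ∧ v b = 0
    · -- degenerate case: E ≡ 0
      set B := {x : ℝ | g x = 0 ∧ v x = 0} with hB_def
      have hBclosed : IsClosed B :=
        (isClosed_eq hgcont continuous_const).inter (isClosed_eq hvcont continuous_const)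
      set E := fun x => v x * v x + 4 * (g x * g x) with hE_def
      have hEcont : Continuous E := by continuity
      have hEderiv : ∀ x, x ∉ B → HasDerivAt E 0 x := by
        intro x hx
        have h1 := stepB x hx
        have := (h1.mul h1).add (((hgd x).mul (hgd x)).const_mul 4)
        refine this.congr_deriv ?_
        ring
      have hE0 : ∀ θ, E θ = 0 := by
        intro θ
        obtain ⟨b, hb⟩ := hB
        have hEb : E b = 0 := by rw [hE_def]; simp [hb.1, hb.2]
        rcases le_total θ b with hle | hle
        · set c := sInf (B ∩ Ici θ) with hc_def
          have hne : (B ∩ Ici θ).Nonempty := ⟨b, hb, hle⟩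
          have hbdd : BddBelow (B ∩ Ici θ) := ⟨θ, fun x hx => hx.2⟩
          have hcmem := (hBclosed.inter isClosed_Ici).csInf_mem hne hbdd
          have hθc : θ ≤ c := hcmem.2
          have hno : ∀ x ∈ Ico θ c, x ∉ B := by
            intro x hx hxB
            exact absurd (csInf_le hbdd ⟨hxB, hx.1⟩) (not_le.mpr hx.2)
          have := constant_of_has_deriv_right_zero (f := E) (a := θ) (b := c)
            hEcont.continuousOn
            (fun x hx => (hEderiv x (hno x hx)).hasDerivWithinAt)
          have hEc := this c (right_mem_Icc.mpr hθc)
          have : E c = 0 := by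
            have := hcmem.1
            rw [hE_def]; simp [hc_def, this.1, this.2]
          rw [← hEc]; exact this
        · set c := sSup (B ∩ Iic θ) with hc_def
          have hne : (B ∩ Iic θ).Nonempty := ⟨b, hb, hle⟩
          have hbdd : BddAbove (B ∩ Iic θ) := ⟨θ, fun x hx => hx.2⟩
          have hcmem := (hBclosed.inter isClosed_Iic).csSup_mem hne hbdd
          have hθc : c ≤ θ := hcmem.2
          have hno : ∀ x, c < x → x ≤ θ → x ∉ B := by
            intro x h1 h2 hxB
            exact absurd (le_csSup hbdd ⟨hxB, h2⟩) (not_le.mpr h1)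
          -- use E ∘ neg on [-θ, -c]
          have hcont' : ContinuousOn (fun x => E (-x)) (Icc (-θ) (-c)) :=
            (hEcont.comp continuous_neg).continuousOn
          have hderiv' : ∀ x ∈ Ico (-θ) (-c), HasDerivWithinAt (fun y => E (-y)) 0 (Ici x) x := by
            intro x hx
            have hnx : -x ∉ B := hno (-x) (by linarith [hx.2]) (by linarith [hx.1])
            have h1 := (hEderiv (-x) hnx).comp x (hasDerivAt_neg x)
            have h2 : HasDerivAt (fun y => E (-y)) 0 x := by
              refine h1.congr_deriv ?_; ring
            exact h2.hasDerivWithinAt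
          have := constant_of_has_deriv_right_zero hcont' hderiv' (-c)
            (right_mem_Icc.mpr (by linarith))
          simp only [neg_neg] at this
          have hEc : E c = 0 := by
            have h := hcmem.1
            rw [hE_def]; simp [hc_def, h.1, h.2]
          rw [← this, hEc]
      intro θ
      have h1 : g θ = 0 := by
        have := hE0 θ
        simp only [hE_def] at this
        have h2 := mul_self_nonneg (v θ)
        have h3 := mul_self_nonneg (g θ)
        have : g θ * g θ = 0 := by nlinarith
        exact mul_self_eq_zero.mp this
      have h2 : g 0 = 0 := by
        have := hE0 0
        simp only [hE_def] at this
        have h3 := mul_self_nonneg (v 0)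
        have : g 0 * g 0 = 0 := by nlinarith [mul_self_nonneg (g 0)]
        exact mul_self_eq_zero.mp this
      have h3 : v 0 = 0 := by
        have := hE0 0
        simp only [hE_def] at this
        have : v 0 * v 0 = 0 := by nlinarith [mul_self_nonneg (g 0), mul_self_nonneg (v 0)]
        exact mul_self_eq_zero.mp this
      rw [h1, h2, h3]; ring
    · -- nondegenerate: ODE holds everywhere
      push_neg at hB
      have hall : ∀ θ, HasDerivAt v (-(4 * g θ)) θ := by
        intro θ
        apply stepB
        intro ⟨h1, h2⟩
        exact hB θ h1 h2
      set w := fun θ => g 0 * Real.cos (2*θ) + v 0 / 2 * Real.sin (2*θ) with hw_def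
      set w' := fun θ => v 0 * Real.cos (2*θ) - 2 * g 0 * Real.sin (2*θ) with hw'_def
      have hw : ∀ θ, HasDerivAt w (w' θ) θ := by
        intro θ
        have := ((hc2 θ).const_mul (g 0)).add ((hs2 θ).const_mul (v 0 / 2))
        refine this.congr_deriv ?_
        rw [hw'_def]; ring
      have hw' : ∀ θ, HasDerivAt w' (-(4 * w θ)) θ := by
        intro θ
        have := ((hc2 θ).const_mul (v 0)).sub ((hs2 θ).const_mul (2 * g 0))
        refine this.congr_deriv ?_
        rw [hw_def]; ring
      set P := fun θ => (v θ - w' θ) * (v θ - w' θ) + 4 * ((g θ - w θ) * (g θ - w θ)) with hP_def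
      have hPd : ∀ θ, HasDerivAt P 0 θ := by
        intro θ
        have h1 : HasDerivAt (fun x => v x - w' x) (-(4 * g θ) - -(4 * w θ)) θ :=
          (hall θ).sub (hw' θ)
        have h2 : HasDerivAt (fun x => g x - w x) (v θ - w' θ) θ :=
          (hgd θ).sub (hw θ)
        have := (h1.mul h1).add ((h2.mul h2).const_mul 4)
        refine this.congr_deriv ?_
        ring
      have hPconst : ∀ θ, P θ = P 0 :=
        fun θ => is_const_of_deriv_eq_zero (fun x => (hPd x).differentiableAt)
          (fun x => (hPd x).deriv) θ 0
      have hP0 : P 0 = 0 := by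
        rw [hP_def]
        simp [hw_def, hw'_def]
      intro θ
      have := hPconst θ
      rw [hP0] at this
      simp only [hP_def] at this
      have h1 : (g θ - w θ) * (g θ - w θ) = 0 := by
        nlinarith [mul_self_nonneg (v θ - w' θ), mul_self_nonneg (g θ - w θ)]
      have := mul_self_eq_zero.mp h1
      have : g θ = w θ := by linarith
      rw [this]
  -- integrate: f = F
  refine ⟨-(v 0) / 4, g 0 / 2, f 0 + v 0 / 4, ?_⟩
  set F := fun θ => f 0 + (g 0 / 2 * Real.sin (2*θ) + v 0 / 4 * (1 - Real.cos (2*θ))) with hF_def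
  have hFd : ∀ θ, HasDerivAt F (g θ) θ := by
    intro θ
    have h1 := (hs2 θ).const_mul (g 0 / 2)
    have h2 : HasDerivAt (fun y => (1:ℝ) - Real.cos (2*y)) (0 - (-Real.sin (2*θ) * 2)) θ :=
      (hasDerivAt_const θ (1:ℝ)).sub (hc2 θ)
    have h3 := (h1.add (h2.const_mul (v 0 / 4))).const_add (f 0)
    refine h3.congr_deriv ?_
    rw [hgw θ]; ring
  have hD : ∀ θ, HasDerivAt (fun x => f x - F x) 0 θ := by
    intro θ
    have := (hfd θ).sub (hFd θ)
    exact this.congr_deriv (sub_self _)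
  have hDconst : ∀ θ, f θ - F θ = f 0 - F 0 :=
    fun θ => is_const_of_deriv_eq_zero (fun x => (hD x).differentiableAt)
      (fun x => (hD x).deriv) θ 0
  intro θ
  have hF0 : F 0 = f 0 := by rw [hF_def]; simp
  have := hDconst θ
  rw [hF0] at this
  have hfF : f θ = F θ := by linarith
  rw [hfF, hF_def]
  ring

lemma ellipse_matrix (a b c : ℝ) (hrc : Real.sqrt (a^2 + b^2) < c) :
    ∃ A : Matrix (Fin 2) (Fin 2) ℝ, A.IsSymm ∧ A.PosDef ∧ ∀ x y : ℝ, x^2 + y^2 = 1 →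
      dotProduct (A.mulVec ![x, y]) (A.mulVec ![x, y])
        = c + a*(2*x^2 - 1) + b*(2*y*x) := by
  have hr0 : 0 ≤ Real.sqrt (a^2 + b^2) := Real.sqrt_nonneg _
  have hr2 : Real.sqrt (a^2 + b^2)^2 = a^2 + b^2 := Real.sq_sqrt (by positivity)
  have hc : 0 < c := lt_of_le_of_lt hr0 hrc
  have hcs : 0 < c^2 - a^2 - b^2 := by nlinarith
  set s := Real.sqrt (c^2 - a^2 - b^2) with hs_def
  have hs : 0 < s := Real.sqrt_pos.mpr hcs
  have hs2 : s^2 = c^2 - a^2 - b^2 := Real.sq_sqrt hcs.le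
  set k := Real.sqrt (2*c + 2*s) with hk_def
  have hk : 0 < k := Real.sqrt_pos.mpr (by linarith)
  have hk2 : k^2 = 2*c + 2*s := Real.sq_sqrt (by linarith)
  clear_value s k
  clear hs_def hk_def hr0 hr2 hrc
  refine ⟨!![(c+a+s)/k, b/k; b/k, (c-a+s)/k], ?_, (Matrix.PosDef.of_dotProduct_mulVec_pos ?_ ?_), ?_⟩
  · rw [Matrix.IsSymm]
    ext i j
    fin_cases i <;> fin_cases j <;> simp
  · rw [Matrix.IsHermitian, conjTranspose_eq_transpose_of_trivial]
    ext i j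
    fin_cases i <;> fin_cases j <;> simp
  · intro x hx
    have hx01 : x 0 ≠ 0 ∨ x 1 ≠ 0 := by
      by_contra hcon
      push_neg at hcon
      apply hx
      ext i
      fin_cases i <;> simp [hcon.1, hcon.2]
    have hxx : 0 < (x 0)^2 + (x 1)^2 := by
      rcases hx01 with h1 | h1 <;>
        nlinarith [mul_self_pos.mpr h1, sq_nonneg (x 0), sq_nonneg (x 1)]
    have hrw : dotProduct (star x) ((!![(c+a+s)/k, b/k; b/k, (c-a+s)/k] :
        Matrix (Fin 2) (Fin 2) ℝ).mulVec x) =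
        ((c+a+s)*(x 0)^2 + 2*b*(x 0)*(x 1) + (c-a+s)*(x 1)^2) / k := by
      simp [Matrix.mulVec, dotProduct, Fin.sum_univ_two]
      field_simp
      ring
    rw [hrw]
    apply div_pos _ hk
    nlinarith [sq_nonneg ((c+a+s)*(x 0) + b*(x 1)), sq_nonneg ((c-a+s)*(x 1) + b*(x 0)),
      mul_pos (mul_pos hs (show (0:ℝ) < c + s by linarith)) hxx, hs2,
      show (0:ℝ) < 2*c + 2*s by linarith]
  · intro x y hpy
    have expand : dotProduct ((!![(c+a+s)/k, b/k; b/k, (c-a+s)/k] :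
        Matrix (Fin 2) (Fin 2) ℝ).mulVec ![x, y])
        ((!![(c+a+s)/k, b/k; b/k, (c-a+s)/k] :
        Matrix (Fin 2) (Fin 2) ℝ).mulVec ![x, y]) =
        (((c+a+s)*x + b*y)^2 + (b*x + (c-a+s)*y)^2) / k^2 := by
      simp [Matrix.mulVec, dotProduct, Fin.sum_univ_two]
      field_simp
    rw [expand, hk2, div_eq_iff (by linarith : (2*c + 2*s : ℝ) ≠ 0)]
    linear_combination (x^2 + y^2) * hs2 + (2*c+2*s)*(c-a) * hpy

/-- If `h` is positive, C², 2π-periodic, with `h + h'' > 0` and `(h²)''' + 4 (h²)' = 0`,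
then `h` is the support function of an origin-centered ellipse: `h θ = ‖A e^{iθ}‖`
for some symmetric positive-definite matrix `A`. -/
theorem stmt7 (h : ℝ → ℝ) (hh : ContDiff ℝ 2 h) (hper : Function.Periodic h (2 * Real.pi))
    (hpos : ∀ θ, 0 < h θ) (hconv : ∀ θ, 0 < h θ + deriv (deriv h) θ)
    (hode : ∀ θ, iteratedDeriv 3 (fun y => (h y) ^ 2) θ +
        4 * deriv (fun y => (h y) ^ 2) θ = 0) :
    ∃ A : Matrix (Fin 2) (Fin 2) ℝ, A.IsSymm ∧ A.PosDef ∧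
      ∀ θ, h θ = Real.sqrt (dotProduct (A.mulVec ![Real.cos θ, Real.sin θ])
          (A.mulVec ![Real.cos θ, Real.sin θ])) := by
  obtain ⟨a, b, c, hform'⟩ := main_ode (fun y => (h y)^2) (hh.pow 2) (fun θ => by
    have h1 := hode θ
    rw [show iteratedDeriv 3 (fun y => (h y)^2) = deriv (iteratedDeriv 2 (fun y => (h y)^2))
        from iteratedDeriv_succ,
      show iteratedDeriv 2 (fun y => (h y)^2) = deriv (iteratedDeriv 1 (fun y => (h y)^2))
        from iteratedDeriv_succ, iteratedDeriv_one] at h1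
    linarith)
  have hform : ∀ θ, (h θ)^2 = c + a * Real.cos (2*θ) + b * Real.sin (2*θ) := hform'
  have hpos' : ∀ θ, 0 < c + a * Real.cos (2*θ) + b * Real.sin (2*θ) := by
    intro θ
    rw [← hform θ]
    exact pow_pos (hpos θ) 2
  have hr0 : 0 ≤ Real.sqrt (a^2 + b^2) := Real.sqrt_nonneg _
  have hr2 : Real.sqrt (a^2 + b^2)^2 = a^2 + b^2 := Real.sq_sqrt (by positivity)
  have hrc : Real.sqrt (a^2 + b^2) < c := by
    by_cases hab : a = 0 ∧ b = 0
    · have hr' : Real.sqrt (a^2 + b^2) = 0 := by rw [hab.1, hab.2]; simp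
      have h0 := hpos' 0
      rw [hr', hab.1, hab.2] at *
      simpa using h0
    · set r := Real.sqrt (a^2 + b^2) with hr_def
      set z : ℂ := ⟨-a, -b⟩ with hz_def
      have hz : z ≠ 0 := by
        simp only [hz_def, ne_eq, Complex.ext_iff, Complex.zero_re, Complex.zero_im]
        intro ⟨h1, h2⟩
        exact hab ⟨by linarith, by linarith⟩
      have habs : ‖z‖ = r := by
        rw [Complex.norm_def, hz_def, Complex.normSq_mk, hr_def]
        congr 1
        ring
      have hrpos : 0 < r := habs ▸ norm_pos_iff.mpr hz
      have h2θ0 : 2 * (Complex.arg z / 2) = Complex.arg z := by ring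
      have hcos : Real.cos (2*(Complex.arg z / 2)) = -a / r := by
        rw [h2θ0, Complex.cos_arg hz, habs, hz_def]
      have hsin : Real.sin (2*(Complex.arg z / 2)) = -b / r := by
        rw [h2θ0, Complex.sin_arg, habs, hz_def]
      have hp := hpos' (Complex.arg z / 2)
      rw [hcos, hsin] at hp
      have h4 : a * (-a/r) + b * (-b/r) = -r := by
        field_simp
        nlinarith [hr2]
      nlinarith [hp, h4]
  obtain ⟨A, hAsymm, hApos, hAform⟩ := ellipse_matrix a b c hrc
  refine ⟨A, hAsymm, hApos, fun θ => ?_⟩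
  rw [hAform (Real.cos θ) (Real.sin θ) (Real.cos_sq_add_sin_sq θ)]
  have : c + a*(2*(Real.cos θ)^2 - 1) + b*(2*(Real.sin θ)*(Real.cos θ)) = (h θ)^2 := by
    rw [hform θ, Real.cos_two_mul, Real.sin_two_mul]
  rw [this, Real.sqrt_sq (hpos θ).le]
end

section
/- Let γ : ℝ → ℝ² be the support parametrization of a C² oval O, i.e., γ'(θ) = |γ'(θ)|·i e^{iθ} with |γ'| > 0 and γ 2π-periodic. Define the centrix c(θ) = (γ(θ) + γ(θ+π))/2. Then c is constant if and only if O = γ(ℝ) is centrally symmetric, i.e., there exists c₀ ∈ ℝ² with 2c₀ − O = O. -/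
/-- real part computation -/
lemma stmt12_calc (r x θ : ℝ) :
    ((r : ℂ) * Complex.I * Complex.exp ((x:ℂ) * Complex.I) *
        Complex.exp (-(θ:ℂ) * Complex.I)).re = -r * Real.sin (x - θ) := by
  rw [mul_assoc, ← Complex.exp_add]
  have h : ((x:ℂ) * Complex.I + -(θ:ℂ) * Complex.I) = (↑(x - θ) : ℂ) * Complex.I := by
    push_cast; ring
  rw [h]
  rw [show ((r:ℂ) * Complex.I * Complex.exp (↑(x - θ) * Complex.I)).re
      = r * (Complex.I * Complex.exp (↑(x - θ) * Complex.I)).re by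
    rw [mul_assoc]; exact Complex.re_ofReal_mul _ _]
  rw [Complex.mul_re, Complex.I_re, Complex.I_im, Complex.exp_ofReal_mul_I_im]
  ring

open Real in
/-- Key lemma: the support parametrization maximizes the linear functional in direction
`e^{iθ}` at `θ`, uniquely up to equality of points. -/
lemma stmt12_aux (γ : ℝ → ℂ) (hdiff : Differentiable ℝ γ)
    (hper : Function.Periodic γ (2 * Real.pi))
    (hspt : ∀ θ : ℝ, deriv γ θ = (‖deriv γ θ‖ : ℂ) * Complex.I *
        Complex.exp (θ * Complex.I))
    (hreg : ∀ θ, deriv γ θ ≠ 0) (θ s : ℝ) :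
    (γ s * Complex.exp (-(θ:ℂ) * Complex.I)).re ≤
      (γ θ * Complex.exp (-(θ:ℂ) * Complex.I)).re ∧
    ((γ s * Complex.exp (-(θ:ℂ) * Complex.I)).re =
      (γ θ * Complex.exp (-(θ:ℂ) * Complex.I)).re → γ s = γ θ) := by
  set K := Complex.exp (-(θ:ℂ) * Complex.I) with hK
  set F : ℝ → ℝ := fun t => (γ t * K).re with hFdef
  have hF : ∀ t, HasDerivAt F (-(‖deriv γ t‖) * Real.sin (t - θ)) t := by
    intro t
    have h1 : HasDerivAt (fun t => γ t * K) (deriv γ t * K) t :=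
      ((hdiff t).hasDerivAt).mul_const K
    have h2 : HasDerivAt F ((deriv γ t * K).re) t :=
      Complex.reCLM.hasFDerivAt.comp_hasDerivAt t h1
    have h3 : (deriv γ t * K).re = -(‖deriv γ t‖) * Real.sin (t - θ) := by
      conv_lhs => rw [hspt t]
      rw [hK]
      exact stmt12_calc _ _ _
    rw [← h3]
    exact h2
  have hcont : Continuous F := Complex.continuous_re.comp (hdiff.continuous.mul continuous_const)
  have mono : StrictMonoOn F (Set.Icc (θ - π) θ) := by
    apply strictMonoOn_of_deriv_pos (convex_Icc _ _) hcont.continuousOn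
    intro x hx
    rw [interior_Icc] at hx
    rw [(hF x).deriv]
    have hr : 0 < ‖deriv γ x‖ := (norm_pos_iff.mpr (hreg x))
    have hs : Real.sin (x - θ) < 0 :=
      Real.sin_neg_of_neg_of_neg_pi_lt (by linarith [hx.2]) (by linarith [hx.1])
    nlinarith
  have anti : StrictAntiOn F (Set.Icc θ (θ + π)) := by
    apply strictAntiOn_of_deriv_neg (convex_Icc _ _) hcont.continuousOn
    intro x hx
    rw [interior_Icc] at hx
    rw [(hF x).deriv]
    have hr : 0 < ‖deriv γ x‖ := (norm_pos_iff.mpr (hreg x))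
    have hs : 0 < Real.sin (x - θ) :=
      Real.sin_pos_of_pos_of_lt_pi (by linarith [hx.1]) (by linarith [hx.2])
    nlinarith
  -- reduce s to the fundamental window [θ - π, θ + π)
  set s' := toIcoMod Real.two_pi_pos (θ - π) s with hs'def
  have hmem : s' ∈ Set.Ico (θ - π) (θ - π + 2 * π) := toIcoMod_mem_Ico Real.two_pi_pos (θ - π) s
  have hγeq : γ s' = γ s := by
    have h := self_sub_toIcoMod Real.two_pi_pos (θ - π) s
    rw [zsmul_eq_mul] at h
    have hk : s = s' + (toIcoDiv Real.two_pi_pos (θ - π) s : ℝ) * (2 * π) := by linarith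
    rw [hk]
    exact ((hper.int_mul (toIcoDiv Real.two_pi_pos (θ - π) s)) s').symm
  have key : F s < F θ ∨ γ s = γ θ := by
    rcases le_or_gt s' θ with hcase | hcase
    · rcases eq_or_lt_of_le hcase with h | h
      · right; rw [← hγeq, h]
      · left
        have := mono ⟨hmem.1, hcase⟩ ⟨by linarith [Real.pi_pos], le_refl θ⟩ h
        have hFs : F s' = F s := by rw [hFdef]; simp only; rw [hγeq]
        linarith
    · left
      have hlt : s' < θ + π := by have := hmem.2; linarith
      have := anti ⟨le_refl θ, by linarith [Real.pi_pos]⟩ ⟨le_of_lt hcase, le_of_lt hlt⟩ hcase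
      have hFs : F s' = F s := by rw [hFdef]; simp only; rw [hγeq]
      linarith
  constructor
  · rcases key with h | h
    · exact le_of_lt h
    · exact le_of_eq (by rw [h])
  · intro heq
    rcases key with h | h
    · exact absurd heq (ne_of_lt h)
    · exact h

/-- The centrix of an oval (given by its support parametrization) is constant iff the
oval is centrally symmetric. -/
theorem stmt12 (γ : ℝ → ℂ) (hdiff : Differentiable ℝ γ)
    (hper : Function.Periodic γ (2 * Real.pi))
    (hspt : ∀ θ : ℝ, deriv γ θ = (‖deriv γ θ‖ : ℂ) * Complex.I *
        Complex.exp (θ * Complex.I))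
    (hreg : ∀ θ, deriv γ θ ≠ 0)
    (c : ℝ → ℂ) (hc : ∀ θ, c θ = (γ θ + γ (θ + Real.pi)) / 2) :
    (∃ c₀ : ℂ, ∀ θ, c θ = c₀) ↔
    (∃ c₀ : ℂ, (fun p : ℂ => 2 * c₀ - p) '' Set.range γ = Set.range γ) := by
  constructor
  · rintro ⟨c₀, h⟩
    refine ⟨c₀, ?_⟩
    have hrel : ∀ θ, γ (θ + Real.pi) = 2 * c₀ - γ θ := by
      intro θ
      have h1 := (hc θ).symm.trans (h θ)
      linear_combination 2 * h1
    apply Set.Subset.antisymm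
    · rintro p ⟨q, ⟨θ, rfl⟩, rfl⟩
      exact ⟨θ + Real.pi, by simpa using hrel θ⟩
    · rintro p ⟨θ, rfl⟩
      refine ⟨γ (θ + Real.pi), ⟨θ + Real.pi, rfl⟩, ?_⟩
      have h1 := hrel (θ + Real.pi)
      rw [show θ + Real.pi + Real.pi = θ + 2 * Real.pi by ring, hper θ] at h1
      show 2 * c₀ - γ (θ + Real.pi) = γ θ
      linear_combination -h1
  · rintro ⟨c₀, hsym⟩
    refine ⟨c₀, fun θ => ?_⟩
    set K := Complex.exp (-(θ:ℂ) * Complex.I) with hKdef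
    have E : Complex.exp (-(↑(θ + Real.pi):ℂ) * Complex.I) = -K := by
      rw [hKdef]
      push_cast
      rw [show (-(↑θ + ↑Real.pi) : ℂ) * Complex.I
          = -(θ:ℂ) * Complex.I + -(Real.pi:ℂ) * Complex.I by ring, Complex.exp_add]
      have hpi : Complex.exp (-(Real.pi:ℂ) * Complex.I) = -1 := by
        rw [neg_mul, Complex.exp_neg, Complex.exp_pi_mul_I]
        norm_num
      rw [hpi]; ring
    have h2 : ∀ z w : ℂ, ((2 * z - w) * K).re = 2 * (z * K).re - (w * K).re := by
      intro z w
      rw [sub_mul, Complex.sub_re, mul_assoc, show (2:ℂ) = ((2:ℝ):ℂ) by norm_num,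
        Complex.re_ofReal_mul]
    -- the reflected points lie on the oval
    obtain ⟨u, hu⟩ : 2 * c₀ - γ (θ + Real.pi) ∈ Set.range γ := by
      rw [← hsym]; exact ⟨γ (θ + Real.pi), ⟨θ + Real.pi, rfl⟩, rfl⟩
    obtain ⟨t, ht⟩ : 2 * c₀ - γ θ ∈ Set.range γ := by
      rw [← hsym]; exact ⟨γ θ, ⟨θ, rfl⟩, rfl⟩
    -- maximality in direction θ + π applied to γ t = 2c₀ - γ θ
    have A := (stmt12_aux γ hdiff hper hspt hreg (θ + Real.pi) t).1
    rw [E, ht] at A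
    -- maximality in direction θ applied to γ u = 2c₀ - γ (θ + π)
    have B := (stmt12_aux γ hdiff hper hspt hreg θ u).1
    have Beq := (stmt12_aux γ hdiff hper hspt hreg θ u).2
    rw [hu] at B Beq
    -- turn A into a lower bound
    have A' : (γ θ * K).re ≤ 2 * (c₀ * K).re - (γ (θ + Real.pi) * K).re := by
      have e1 : ((2 * c₀ - γ θ) * -K).re = -((2 * c₀ - γ θ) * K).re := by
        rw [show (2 * c₀ - γ θ) * -K = -((2 * c₀ - γ θ) * K) by ring, Complex.neg_re]
      have e2 : (γ (θ + Real.pi) * -K).re = -(γ (θ + Real.pi) * K).re := by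
        rw [show γ (θ + Real.pi) * -K = -(γ (θ + Real.pi) * K) by ring, Complex.neg_re]
      rw [e1, e2, h2] at A
      linarith
    have B' : 2 * (c₀ * K).re - (γ (θ + Real.pi) * K).re ≤ (γ θ * K).re := by
      rw [h2] at B; linarith
    have heq : ((2 * c₀ - γ (θ + Real.pi)) * K).re = (γ θ * K).re := by
      rw [h2]; linarith
    have hfinal : 2 * c₀ - γ (θ + Real.pi) = γ θ := Beq heq
    rw [hc θ]
    linear_combination -hfinal / 2
end

section
/- Let ξ, η, F : (−1,1) → ℝ be C² with F > 0, and fix β, m ≠ 0, b ∈ ℝ. Suppose that for all sufficiently small t, whenever (s, t) satisfies F(β+t) = (η(β)+s−η(β+t))² + ((β+t−b)/m − ξ(β+t))², so does (−s, −t) (central symmetry of the planar section about (η(β), β)). If moreover for each small t there exist two distinct values s ≠ s' both satisfying the equation, then η(β+t) + η(β−t) = 2η(β) for all sufficiently small t. -/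
open Set

/-- Axis-lemma computation: central symmetry of the tilted section of a circular tube,
plus two distinct intersection points at each height, forces `η` to be locally odd
around `β`. -/
theorem stmt19 (ξ η F : ℝ → ℝ)
    (hξ : ContDiffOn ℝ 2 ξ (Ioo (-1 : ℝ) 1)) (hη : ContDiffOn ℝ 2 η (Ioo (-1 : ℝ) 1))
    (hF : ContDiffOn ℝ 2 F (Ioo (-1 : ℝ) 1)) (hFpos : ∀ z ∈ Ioo (-1 : ℝ) 1, 0 < F z)
    (β m b : ℝ) (hm : m ≠ 0) (hβ : β ∈ Ioo (-1 : ℝ) 1)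
    (δ : ℝ) (hδ : 0 < δ)
    (hmem : ∀ t : ℝ, |t| < δ → β + t ∈ Ioo (-1 : ℝ) 1 ∧ β - t ∈ Ioo (-1 : ℝ) 1)
    (hsym : ∀ t s : ℝ, |t| < δ →
      (F (β + t) = (η β + s - η (β + t)) ^ 2 + ((β + t - b) / m - ξ (β + t)) ^ 2) →
      (F (β - t) = (η β - s - η (β - t)) ^ 2 + ((β - t - b) / m - ξ (β - t)) ^ 2))
    (htwo : ∀ t : ℝ, |t| < δ → ∃ s s' : ℝ, s ≠ s' ∧
      (F (β + t) = (η β + s - η (β + t)) ^ 2 + ((β + t - b) / m - ξ (β + t)) ^ 2) ∧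
      (F (β + t) = (η β + s' - η (β + t)) ^ 2 + ((β + t - b) / m - ξ (β + t)) ^ 2)) :
    ∀ t : ℝ, |t| < δ → η (β + t) + η (β - t) = 2 * η β := by
  intro t ht
  obtain ⟨s, s', hne, h1, h2⟩ := htwo t ht
  have g1 := hsym t s ht h1
  have g2 := hsym t s' ht h2
  have e1 : (η β + s - η (β + t)) ^ 2 = (η β + s' - η (β + t)) ^ 2 := by linarith
  have e2 : (η β - s - η (β - t)) ^ 2 = (η β - s' - η (β - t)) ^ 2 := by linarith
  have c1 : η β + s - η (β + t) = -(η β + s' - η (β + t)) := by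
    rcases sq_eq_sq_iff_eq_or_eq_neg.mp e1 with h | h
    · exact absurd (by linarith : s = s') hne
    · linarith
  have c2 : η β - s - η (β - t) = -(η β - s' - η (β - t)) := by
    rcases sq_eq_sq_iff_eq_or_eq_neg.mp e2 with h | h
    · exact absurd (by linarith : s = s') hne
    · linarith
  linarith
end
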